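/- Fix q ∈ [0,1/2) and let p₀ ∈ (0,1/2) be the unique solution in (0,1/2) of 4 + (1+2q)·log₂(p₀ ⋆ q) + (3−2q)·log₂(1 − p₀ ⋆ q) = 0, and assume p₀ < 1/4. For every p with p₀ ≤ p ≤ 1/4, the minimum over x ∈ [0,p] of the function f(x) = (1−4p+4x)·(1 − h2((x/(1−4p+4x)) ⋆ q)) (with the convention f(x) = 0 when 1−4p+4x = 0) equals ((1−4p)/(1−4p₀))·(1 − h2(p₀ ⋆ q)), and it is attained at x* = (1−4p)·p₀/(1−4p₀). -/

import Mathlib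

/-!
Put `g u = 1 - h2 (u ⋆ q)`. As `u ↦ u ⋆ q` is affine and `h2` is concave, `g` lies above its
tangents, and the equation defining `p₀` says exactly that the tangent to `g` at `p₀` passes
through `(1/4, 0)`; hence `g u ≥ (1 - 4u) g(p₀) / (1 - 4p₀)`. The function to minimise is the
perspective `f x = t · g (x / t)` with `t = 1 - 4p + 4x`, and `t (1 - 4 (x / t)) = 1 - 4p`, so the
tangent bound becomes `f x ≥ (1 - 4p) g(p₀) / (1 - 4p₀)`, with equality where `x / t = p₀`.
-/

/-- Binary entropy (base 2), with the conventions `h2 0 = h2 1 = 0`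
(automatic since `Real.log 0 = 0`). -/
noncomputable def h2 (y : ℝ) : ℝ := -(y * Real.logb 2 y) - (1 - y) * Real.logb 2 (1 - y)

/-- For `x, y ∈ [0,1]`, `x ⋆ y = x(1−y) + y(1−x)`. -/
noncomputable def bstar (x y : ℝ) : ℝ := x * (1 - y) + y * (1 - x)

open Set Real

theorem ConcaveOn.le_add_mul_sub_of_hasDerivAt {S : Set ℝ} {f : ℝ → ℝ} {x y f' : ℝ}
    (hf : ConcaveOn ℝ S f) (hx : x ∈ S) (hy : y ∈ S) (hf' : HasDerivAt f f' x) :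
    f y ≤ f x + f' * (y - x) := by
  rcases lt_trichotomy x y with hxy | rfl | hyx
  · have := hf.slope_le_of_hasDerivAt hx hy hxy hf'
    rw [slope_def_field, div_le_iff₀ (sub_pos.2 hxy)] at this
    linarith
  · simp
  · have := hf.le_slope_of_hasDerivAt hy hx hyx hf'
    rw [slope_def_field, le_div_iff₀ (sub_pos.2 hyx)] at this
    linarith

theorem h2_eq_binEntropy_div_log_two (y : ℝ) : h2 y = binEntropy y / log 2 := by
  simp only [h2, binEntropy, logb, log_inv]
  ring

theorem concaveOn_h2 : ConcaveOn ℝ (Icc 0 1) h2 := by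
  have h : h2 = fun y ↦ (log 2)⁻¹ • binEntropy y := by
    funext y
    rw [h2_eq_binEntropy_div_log_two, smul_eq_mul, div_eq_inv_mul]
  exact h ▸ strictConcave_binEntropy.concaveOn.smul (inv_nonneg.2 (log_nonneg one_le_two))

theorem hasDerivAt_h2 {y : ℝ} (h0 : y ≠ 0) (h1 : y ≠ 1) :
    HasDerivAt h2 (logb 2 (1 - y) - logb 2 y) y := by
  have := (hasDerivAt_binEntropy h0 h1).div_const (log 2)
  rw [funext h2_eq_binEntropy_div_log_two]
  exact this.congr_deriv (sub_div _ _ _)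

theorem bstar_eq_add_mul (x y : ℝ) : bstar x y = y + (1 - 2 * y) * x := by
  simp only [bstar]; ring

theorem bstar_mem_Icc {x y : ℝ} (hx : x ∈ Icc 0 1) (hy : y ∈ Icc 0 1) : bstar x y ∈ Icc 0 1 := by
  obtain ⟨hx0, hx1⟩ := hx
  obtain ⟨hy0, hy1⟩ := hy
  constructor <;> nlinarith [bstar_eq_add_mul x y]

theorem bstar_mem_Ioo {x y : ℝ} (hx : x ∈ Ioo 0 1) (hy : y ∈ Icc 0 1) : bstar x y ∈ Ioo 0 1 := by
  obtain ⟨hx0, hx1⟩ := hx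
  obtain ⟨hy0, hy1⟩ := hy
  have hx' : 0 < x * (1 - x) := mul_pos hx0 (sub_pos.2 hx1)
  unfold bstar
  constructor <;> nlinarith [mul_nonneg (sub_nonneg.2 hy1) (sq_nonneg x),
    mul_nonneg hy0 (sq_nonneg (1 - x))]

theorem tangent_passes_through_quarter {q p₀ : ℝ}
    (heq : 4 + (1 + 2*q) * logb 2 (bstar p₀ q) + (3 - 2*q) * logb 2 (1 - bstar p₀ q) = 0) :
    (1 - 4 * p₀) * ((1 - 2 * q) * (logb 2 (1 - bstar p₀ q) - logb 2 (bstar p₀ q)))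
      = 4 * (1 - h2 (bstar p₀ q)) := by
  simp only [h2]
  rw [bstar_eq_add_mul] at heq ⊢
  linear_combination -heq

theorem line_through_quarter_le_one_sub_h2_bstar {q p₀ u : ℝ} (hq : q ∈ Icc 0 1) (hp₀ : 0 < p₀)
    (hp₀4 : p₀ < 1/4)
    (heq : 4 + (1 + 2*q) * logb 2 (bstar p₀ q) + (3 - 2*q) * logb 2 (1 - bstar p₀ q) = 0)
    (hu : u ∈ Icc 0 1) :
    (1 - 4 * u) * ((1 - h2 (bstar p₀ q)) / (1 - 4 * p₀)) ≤ 1 - h2 (bstar u q) := by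
  obtain ⟨hs₀, hs₁⟩ := bstar_mem_Ioo ⟨hp₀, by linarith⟩ hq
  have tangent := concaveOn_h2.le_add_mul_sub_of_hasDerivAt
    (Ioo_subset_Icc_self ⟨hs₀, hs₁⟩) (bstar_mem_Icc hu hq) (hasDerivAt_h2 hs₀.ne' (by linarith))
  have hd : 0 < 1 - 4 * p₀ := by linarith
  rw [← mul_div_assoc, div_le_iff₀ hd]
  have hdiff : bstar u q - bstar p₀ q = (1 - 2 * q) * (u - p₀) := by
    simp only [bstar_eq_add_mul]; ring
  rw [hdiff] at tangent
  linear_combination (1 - 4 * p₀) * tangent + (u - p₀) * tangent_passes_through_quarter heq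

theorem le_perspective_of_forall_le {G : ℝ → ℝ} {a p x : ℝ}
    (hG : ∀ u ∈ Icc (0 : ℝ) (1/4), (1 - 4 * u) * a ≤ G u) (hp : p ≤ 1/4) (hx : x ∈ Icc 0 p) :
    (1 - 4 * p) * a ≤ (1 - 4 * p + 4 * x) * G (x / (1 - 4 * p + 4 * x)) := by
  obtain ⟨hx0, hxp⟩ := hx
  rcases (show 0 ≤ 1 - 4 * p + 4 * x by linarith).eq_or_lt with ht | ht
  · have hp' : 1 - 4 * p = 0 := by linarith
    rw [← ht, hp']
    simp
  · have hu : x / (1 - 4 * p + 4 * x) ∈ Icc (0 : ℝ) (1/4) :=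
      ⟨div_nonneg hx0 ht.le, (div_le_iff₀ ht).2 (by linarith)⟩
    have hscale : (1 - 4 * p + 4 * x) * (1 - 4 * (x / (1 - 4 * p + 4 * x))) = 1 - 4 * p := by
      field_simp
      ring
    calc (1 - 4 * p) * a
        = (1 - 4 * p + 4 * x) * ((1 - 4 * (x / (1 - 4 * p + 4 * x))) * a) := by
          rw [← mul_assoc, hscale]
      _ ≤ (1 - 4 * p + 4 * x) * G (x / (1 - 4 * p + 4 * x)) :=
          mul_le_mul_of_nonneg_left (hG _ hu) ht.le

theorem perspective_at_rescaled_eq {G : ℝ → ℝ} {p p₀ : ℝ} (hp₀ : 1 - 4 * p₀ ≠ 0) :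
    (1 - 4*p + 4*((1 - 4*p) * p₀ / (1 - 4*p₀))) *
        G ((1 - 4*p) * p₀ / (1 - 4*p₀) / (1 - 4*p + 4*((1 - 4*p) * p₀ / (1 - 4*p₀))))
      = (1 - 4*p) / (1 - 4*p₀) * G p₀ := by
  have hscale : 1 - 4*p + 4*((1 - 4*p) * p₀ / (1 - 4*p₀)) = (1 - 4*p) / (1 - 4*p₀) := by
    field_simp
    ring
  rcases eq_or_ne (1 - 4 * p) 0 with hp | hp
  · simp [hp]
  · rw [hscale, div_div_div_cancel_right₀ hp₀, mul_div_cancel_left₀ _ hp]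

/-- Fix `q ∈ [0,1/2)`, let `p₀ ∈ (0,1/2)` solve
`4 + (1+2q)·log₂(p₀ ⋆ q) + (3−2q)·log₂(1 − p₀ ⋆ q) = 0`, and assume `p₀ < 1/4`.
For every `p` with `p₀ ≤ p ≤ 1/4`, the minimum over `x ∈ [0,p]` of
`f(x) = (1−4p+4x)·(1 − h2((x/(1−4p+4x)) ⋆ q))` (with `f(x) = 0` when
`1−4p+4x = 0`, which holds automatically since division by zero is zero in Lean
and the prefactor vanishes) equals `((1−4p)/(1−4p₀))·(1 − h2(p₀ ⋆ q))`, attained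
at `x* = (1−4p)·p₀/(1−4p₀)`. -/
theorem min_on_large_p (q p₀ p : ℝ) (hq : q ∈ Set.Ico (0 : ℝ) (1/2))
    (hp₀ : p₀ ∈ Set.Ioo (0 : ℝ) (1/2))
    (heq : 4 + (1 + 2*q) * Real.logb 2 (bstar p₀ q)
        + (3 - 2*q) * Real.logb 2 (1 - bstar p₀ q) = 0)
    (hp₀4 : p₀ < 1/4) (hp1 : p₀ ≤ p) (hp2 : p ≤ 1/4) :
    (∀ x ∈ Set.Icc (0 : ℝ) p,
        ((1 - 4*p) / (1 - 4*p₀)) * (1 - h2 (bstar p₀ q))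
          ≤ (1 - 4*p + 4*x) * (1 - h2 (bstar (x / (1 - 4*p + 4*x)) q))) ∧
    (1 - 4*p) * p₀ / (1 - 4*p₀) ∈ Set.Icc (0 : ℝ) p ∧
    (1 - 4*p + 4*((1 - 4*p) * p₀ / (1 - 4*p₀))) *
        (1 - h2 (bstar ((1 - 4*p) * p₀ / (1 - 4*p₀)
            / (1 - 4*p + 4*((1 - 4*p) * p₀ / (1 - 4*p₀)))) q))
      = ((1 - 4*p) / (1 - 4*p₀)) * (1 - h2 (bstar p₀ q)) := by
  have hq' : q ∈ Icc 0 1 := ⟨hq.1, by linarith [hq.2]⟩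
  have hd : 0 < 1 - 4 * p₀ := by linarith
  refine ⟨fun x hx ↦ ?_, ⟨div_nonneg (mul_nonneg (by linarith) hp₀.1.le) hd.le, ?_⟩,
    perspective_at_rescaled_eq (G := fun u ↦ 1 - h2 (bstar u q)) hd.ne'⟩
  · rw [div_mul_comm, mul_comm]
    refine le_perspective_of_forall_le (G := fun u ↦ 1 - h2 (bstar u q)) (fun u hu ↦ ?_) hp2 hx
    exact line_through_quarter_le_one_sub_h2_bstar hq' hp₀.1 hp₀4 heq ⟨hu.1, by linarith [hu.2]⟩
  · rw [div_le_iff₀ hd]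
    nlinarith
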